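/- Let Z ⊆ (Fin n → ℝ) and let f₁, f₂, h₁, h₂ ∈ Rₙ all be nonzero with f₁.support ∩ f₂.support = ∅. Suppose that every a ∈ Z is a corner root of f₁ + h₁ and of f₂ + h₂, and that MvPolynomial.eval ā h₁ = MvPolynomial.eval ā h₂ for every a ∈ Z. Then every a ∈ Z is a corner root of h₁ * h₂ * (f₁ + f₂). -/

import Mathlib

open MvPolynomial

abbrev 𝕋 : Type := Tropical (WithTop ℝ)

/-- The 𝕋-point determined by a real point. -/
noncomputable def tpt {n : ℕ} (a : Fin n → ℝ) : Fin n → 𝕋 :=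
  fun i => Tropical.trop (a i : WithTop ℝ)

/-- The value at `a` of the `d`-monomial of `f`. -/
noncomputable def mval {n : ℕ} (f : MvPolynomial (Fin n) 𝕋) (d : Fin n →₀ ℕ)
    (a : Fin n → ℝ) : 𝕋 :=
  f.coeff d * ∏ i, (tpt a i) ^ d i

/-- `a` is a corner root of `f` if at least two monomials of `f` attain the value of `f`
at `a`. -/
def IsCornerRoot {n : ℕ} (a : Fin n → ℝ) (f : MvPolynomial (Fin n) 𝕋) : Prop :=
  ∃ d₁ ∈ f.support, ∃ d₂ ∈ f.support, d₁ ≠ d₂ ∧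
    mval f d₁ a = MvPolynomial.eval (tpt a) f ∧ mval f d₂ a = MvPolynomial.eval (tpt a) f

section Aux

open Tropical Finset

variable {n : ℕ} {a : Fin n → ℝ} {f g p q : MvPolynomial (Fin n) 𝕋} {d e : Fin n →₀ ℕ}

/-- The monomial value `ā^d`. -/
noncomputable def tmon (a : Fin n → ℝ) (d : Fin n →₀ ℕ) : 𝕋 := ∏ i, (tpt a i) ^ d i

lemma mval_def (f : MvPolynomial (Fin n) 𝕋) (d : Fin n →₀ ℕ) (a : Fin n → ℝ) :
    mval f d a = f.coeff d * tmon a d := rfl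

lemma tmon_ne_zero (a : Fin n → ℝ) (d : Fin n →₀ ℕ) : tmon a d ≠ 0 := by
  refine Finset.prod_ne_zero_iff.2 fun i _ => pow_ne_zero _ ?_
  intro h
  have : (a i : WithTop ℝ) = ⊤ := by
    simpa [tpt] using congrArg Tropical.untrop h
  exact (WithTop.coe_ne_top) this

lemma tmon_add (a : Fin n → ℝ) (d e : Fin n →₀ ℕ) :
    tmon a (d + e) = tmon a d * tmon a e := by
  simp [tmon, Finsupp.add_apply, pow_add, Finset.prod_mul_distrib]

lemma eval_eq_sum_mval (f : MvPolynomial (Fin n) 𝕋) (a : Fin n → ℝ) :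
    MvPolynomial.eval (tpt a) f = ∑ d ∈ f.support, mval f d a :=
  eval_eq' _ _

lemma tsum_le {α : Type*} {s : Finset α} {g : α → 𝕋} {i : α} (hi : i ∈ s) :
    (∑ j ∈ s, g j) ≤ g i := by
  rw [← Tropical.untrop_le_iff, Finset.untrop_sum']
  exact Finset.inf_le hi

lemma eval_le_mval (hd : d ∈ f.support) :
    MvPolynomial.eval (tpt a) f ≤ mval f d a := by
  rw [eval_eq_sum_mval]; exact tsum_le hd

lemma exists_mval_eq (hf : f ≠ 0) (a : Fin n → ℝ) :
    ∃ d ∈ f.support, mval f d a = MvPolynomial.eval (tpt a) f := by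
  have hne : f.support.Nonempty := Finset.nonempty_iff_ne_empty.2 (by
    simpa [MvPolynomial.support_eq_empty] using hf)
  obtain ⟨d, hd, h⟩ := Finset.exists_mem_eq_inf f.support hne
    (fun d => Tropical.untrop (mval f d a))
  refine ⟨d, hd, ?_⟩
  apply Tropical.untrop_injective
  rw [eval_eq_sum_mval, Finset.untrop_sum']
  exact h.symm

lemma eval_ne_zero (hf : f ≠ 0) (a : Fin n → ℝ) :
    MvPolynomial.eval (tpt a) f ≠ 0 := by
  obtain ⟨d, hd, h⟩ := exists_mval_eq hf a
  rw [← h, mval_def]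
  exact mul_ne_zero (MvPolynomial.mem_support_iff.1 hd) (tmon_ne_zero a d)

lemma ne_zero_of_eval (h : MvPolynomial.eval (tpt a) f ≠ 0) : f ≠ 0 := by
  rintro rfl; simp at h

/-- Master lemma: a monomial value below the eval must be in the support and attain it. -/
lemma master (h0 : MvPolynomial.eval (tpt a) f ≠ 0)
    (hle : mval f d a ≤ MvPolynomial.eval (tpt a) f) :
    d ∈ f.support ∧ mval f d a = MvPolynomial.eval (tpt a) f := by
  have hm0 : mval f d a ≠ 0 := by
    intro h
    exact h0 (le_antisymm (Tropical.le_zero _) (h ▸ hle))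
  have hd : d ∈ f.support := by
    rw [MvPolynomial.mem_support_iff]
    intro hc
    exact hm0 (by rw [mval_def, hc, zero_mul])
  exact ⟨hd, le_antisymm hle (eval_le_mval hd)⟩

lemma mval_add (f g : MvPolynomial (Fin n) 𝕋) (d : Fin n →₀ ℕ) (a : Fin n → ℝ) :
    mval (f + g) d a = mval f d a + mval g d a := by
  simp [mval_def, MvPolynomial.coeff_add, add_mul]

lemma tadd_le_left (x y : 𝕋) : x + y ≤ x := by
  rcases le_total x y with h | h
  · rw [Tropical.add_eq_left h]
  · rw [Tropical.add_eq_right h]; exact h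

lemma tadd_le_right (x y : 𝕋) : x + y ≤ y := by
  rw [add_comm]; exact tadd_le_left y x

set_option maxHeartbeats 1000000 in
lemma coeff_mul_le (p q : MvPolynomial (Fin n) 𝕋) (d e : Fin n →₀ ℕ) :
    (p * q).coeff (d + e) ≤ p.coeff d * q.coeff e := by
  rw [MvPolynomial.coeff_mul]
  exact tsum_le (i := (d, e)) (Finset.HasAntidiagonal.mem_antidiagonal.2 rfl)

lemma mval_mul_le (p q : MvPolynomial (Fin n) 𝕋) (d e : Fin n →₀ ℕ) (a : Fin n → ℝ) :
    mval (p * q) (d + e) a ≤ mval p d a * mval q e a := by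
  rw [mval_def, mval_def, mval_def, tmon_add, ← mul_mul_mul_comm]
  exact mul_le_mul' (coeff_mul_le p q d e) le_rfl

lemma finsupp_add_right_cancel {d₁ d₂ e : Fin n →₀ ℕ} (h : d₁ + e = d₂ + e) : d₁ = d₂ := by
  ext i
  have := DFunLike.congr_fun h i
  simp only [Finsupp.add_apply] at this
  omega

/-- Corner roots are preserved under multiplication by a nonzero polynomial. -/
lemma corner_mul (hq : q ≠ 0) (h : IsCornerRoot a p) : IsCornerRoot a (p * q) := by
  obtain ⟨d₁, hd₁, d₂, hd₂, hne, he₁, he₂⟩ := h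
  have hp : p ≠ 0 := by rintro rfl; simp at hd₁
  obtain ⟨e, he, hemin⟩ := exists_mval_eq hq a
  have hP0 : MvPolynomial.eval (tpt a) (p * q) ≠ 0 := by
    rw [map_mul]
    exact mul_ne_zero (eval_ne_zero hp a) (eval_ne_zero hq a)
  have key : ∀ d, d ∈ p.support → mval p d a = MvPolynomial.eval (tpt a) p →
      mval (p * q) (d + e) a = MvPolynomial.eval (tpt a) (p * q) ∧
        (d + e) ∈ (p * q).support := by
    intro d _ hdv
    have hle : mval (p * q) (d + e) a ≤ MvPolynomial.eval (tpt a) (p * q) := by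
      calc mval (p * q) (d + e) a ≤ mval p d a * mval q e a := mval_mul_le p q d e a
        _ = MvPolynomial.eval (tpt a) (p * q) := by rw [hdv, hemin, map_mul]
    obtain ⟨hm, heq⟩ := master hP0 hle
    exact ⟨heq, hm⟩
  obtain ⟨heq₁, hm₁⟩ := key d₁ hd₁ he₁
  obtain ⟨heq₂, hm₂⟩ := key d₂ hd₂ he₂
  exact ⟨d₁ + e, hm₁, d₂ + e, hm₂, fun h => hne (finsupp_add_right_cancel h), heq₁, heq₂⟩

/-- Corner roots transfer to a sum when the corner factor has the smaller value. -/
lemma corner_add (hp : p ≠ 0) (h : IsCornerRoot a p)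
    (hle : MvPolynomial.eval (tpt a) p ≤ MvPolynomial.eval (tpt a) q) :
    IsCornerRoot a (p + q) := by
  obtain ⟨d₁, hd₁, d₂, hd₂, hne, he₁, he₂⟩ := h
  have hev : MvPolynomial.eval (tpt a) (p + q) = MvPolynomial.eval (tpt a) p := by
    rw [map_add, Tropical.add_eq_left hle]
  have hS0 : MvPolynomial.eval (tpt a) (p + q) ≠ 0 := by
    rw [hev]; exact eval_ne_zero hp a
  have key : ∀ d, mval p d a = MvPolynomial.eval (tpt a) p →
      mval (p + q) d a = MvPolynomial.eval (tpt a) (p + q) ∧ d ∈ (p + q).support := by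
    intro d hdv
    have hle' : mval (p + q) d a ≤ MvPolynomial.eval (tpt a) (p + q) := by
      rw [mval_add, hev, ← hdv]
      exact tadd_le_left _ _
    obtain ⟨hm, heq⟩ := master hS0 hle'
    exact ⟨heq, hm⟩
  obtain ⟨heq₁, hm₁⟩ := key d₁ he₁
  obtain ⟨heq₂, hm₂⟩ := key d₂ he₂
  exact ⟨d₁, hm₁, d₂, hm₂, hne, heq₁, heq₂⟩

/-- Decomposition of a corner root of `f + h`. -/
lemma decomp (hf : f ≠ 0) (hh : g ≠ 0) (hc : IsCornerRoot a (f + g)) :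
    (IsCornerRoot a f ∧ MvPolynomial.eval (tpt a) f ≤ MvPolynomial.eval (tpt a) g) ∨
    (IsCornerRoot a g ∧ MvPolynomial.eval (tpt a) g ≤ MvPolynomial.eval (tpt a) f) ∨
    ((∃ d ∈ f.support, mval f d a = MvPolynomial.eval (tpt a) f) ∧
     (∃ d ∈ g.support, mval g d a = MvPolynomial.eval (tpt a) g) ∧
     MvPolynomial.eval (tpt a) f = MvPolynomial.eval (tpt a) g) := by
  obtain ⟨d₁, hd₁, d₂, hd₂, hne, he₁, he₂⟩ := hc
  set E := MvPolynomial.eval (tpt a) (f + g) with hE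
  set F := MvPolynomial.eval (tpt a) f with hF
  set G := MvPolynomial.eval (tpt a) g with hG
  have hEfg : E = F + G := by rw [hE, map_add]
  have hF0 : F ≠ 0 := eval_ne_zero hf a
  have hG0 : G ≠ 0 := eval_ne_zero hh a
  have hEF : E ≤ F := hEfg ▸ tadd_le_left F G
  have hEG : E ≤ G := hEfg ▸ tadd_le_right F G
  -- each witness attains via f or via g
  have step : ∀ d, mval (f + g) d a = E →
      (d ∈ f.support ∧ mval f d a = F ∧ F = E) ∨
      (d ∈ g.support ∧ mval g d a = G ∧ G = E) := by
    intro d hd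
    rw [mval_add] at hd
    rcases Tropical.add_eq_iff.1 hd with ⟨hfd, _⟩ | ⟨hgd, _⟩
    · left
      obtain ⟨hm, heq⟩ := master hF0 (hfd ▸ hEF)
      exact ⟨hm, heq, le_antisymm ((heq.symm.trans hfd) ▸ le_rfl) hEF⟩
    · right
      obtain ⟨hm, heq⟩ := master hG0 (hgd ▸ hEG)
      exact ⟨hm, heq, le_antisymm ((heq.symm.trans hgd) ▸ le_rfl) hEG⟩
  rcases step d₁ he₁ with ⟨hm₁, hv₁, hFE₁⟩ | ⟨hm₁, hv₁, hGE₁⟩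
  · rcases step d₂ he₂ with ⟨hm₂, hv₂, _⟩ | ⟨hm₂, hv₂, hGE₂⟩
    · exact Or.inl ⟨⟨d₁, hm₁, d₂, hm₂, hne, hv₁, hv₂⟩,
        by rw [hFE₁]; exact hEG⟩
    · exact Or.inr (Or.inr ⟨⟨d₁, hm₁, hv₁⟩, ⟨d₂, hm₂, hv₂⟩, hFE₁.trans hGE₂.symm⟩)
  · rcases step d₂ he₂ with ⟨hm₂, hv₂, hFE₂⟩ | ⟨hm₂, hv₂, _⟩
    · exact Or.inr (Or.inr ⟨⟨d₂, hm₂, hv₂⟩, ⟨d₁, hm₁, hv₁⟩, hFE₂.trans hGE₁.symm⟩)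
    · exact Or.inr (Or.inl ⟨⟨d₁, hm₁, d₂, hm₂, hne, hv₁, hv₂⟩,
        by rw [hGE₁]; exact hEF⟩)

end Aux

/-- The exchange theorem for corner ideals: if every `a ∈ Z` is a corner root of
`f₁ + h₁` and `f₂ + h₂`, `f₁` and `f₂` have disjoint supports, and `h₁, h₂` take equal
values on `Z`, then every `a ∈ Z` is a corner root of `h₁ * h₂ * (f₁ + f₂)`. -/
theorem stmt7 {n : ℕ} (Z : Set (Fin n → ℝ)) (f₁ f₂ h₁ h₂ : MvPolynomial (Fin n) 𝕋)
    (hf₁0 : f₁ ≠ 0) (hf₂0 : f₂ ≠ 0) (hh₁0 : h₁ ≠ 0) (hh₂0 : h₂ ≠ 0)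
    (hdisj : f₁.support ∩ f₂.support = ∅)
    (h1 : ∀ a ∈ Z, IsCornerRoot a (f₁ + h₁))
    (h2 : ∀ a ∈ Z, IsCornerRoot a (f₂ + h₂))
    (hval : ∀ a ∈ Z, MvPolynomial.eval (tpt a) h₁ = MvPolynomial.eval (tpt a) h₂) :
    ∀ a ∈ Z, IsCornerRoot a (h₁ * h₂ * (f₁ + f₂)) := by
  intro a haZ
  set F₁ := MvPolynomial.eval (tpt a) f₁ with hF₁
  set F₂ := MvPolynomial.eval (tpt a) f₂ with hF₂
  set H₁ := MvPolynomial.eval (tpt a) h₁ with hH₁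
  set H₂ := MvPolynomial.eval (tpt a) h₂ with hH₂
  have hH : H₁ = H₂ := hval a haZ
  have hF₁0 : F₁ ≠ 0 := eval_ne_zero hf₁0 a
  have hF₂0 : F₂ ≠ 0 := eval_ne_zero hf₂0 a
  have hH₁0 : H₁ ≠ 0 := eval_ne_zero hh₁0 a
  have hH₂0 : H₂ ≠ 0 := eval_ne_zero hh₂0 a
  have hsum0 : f₁ + f₂ ≠ 0 := by
    apply ne_zero_of_eval (a := a)
    rw [map_add]
    intro h
    exact hF₁0 (Tropical.add_eq_zero_iff.1 h).1
  have hh₁₂0 : h₁ * h₂ ≠ 0 := mul_ne_zero hh₁0 hh₂0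
  -- route 1: a corner root of h₁ gives the result
  have route_h1 : IsCornerRoot a h₁ → IsCornerRoot a (h₁ * h₂ * (f₁ + f₂)) := by
    intro hc
    have := corner_mul (mul_ne_zero hh₂0 hsum0) hc
    rwa [← mul_assoc] at this
  have route_h2 : IsCornerRoot a h₂ → IsCornerRoot a (h₁ * h₂ * (f₁ + f₂)) := by
    intro hc
    have := corner_mul (mul_ne_zero hh₁0 hsum0) hc
    have heq : h₂ * (h₁ * (f₁ + f₂)) = h₁ * h₂ * (f₁ + f₂) := by ring
    rwa [heq] at this
  -- route 2: a corner root of f₁ with F₁ minimal gives the result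
  have route_f1 : IsCornerRoot a f₁ → F₁ ≤ F₂ → IsCornerRoot a (h₁ * h₂ * (f₁ + f₂)) := by
    intro hc hle
    have hc2 : IsCornerRoot a (f₁ + f₂) := corner_add hf₁0 hc hle
    have := corner_mul hh₁₂0 hc2
    have heq : (f₁ + f₂) * (h₁ * h₂) = h₁ * h₂ * (f₁ + f₂) := by ring
    rwa [heq] at this
  have route_f2 : IsCornerRoot a f₂ → F₂ ≤ F₁ → IsCornerRoot a (h₁ * h₂ * (f₁ + f₂)) := by
    intro hc hle
    have hc2 : IsCornerRoot a (f₂ + f₁) := corner_add hf₂0 hc hle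
    have := corner_mul hh₁₂0 hc2
    have heq : (f₂ + f₁) * (h₁ * h₂) = h₁ * h₂ * (f₁ + f₂) := by ring
    rwa [heq] at this
  rcases decomp hf₁0 hh₁0 (h1 a haZ) with ⟨hcf₁, hle₁⟩ | ⟨hch₁, _⟩ | ⟨⟨d, hd, hdv⟩, ⟨d', hd', hdv'⟩, hFH₁⟩
  · -- corner root of f₁, F₁ ≤ H₁
    rcases decomp hf₂0 hh₂0 (h2 a haZ) with ⟨hcf₂, hle₂⟩ | ⟨hch₂, _⟩ | ⟨_, _, hFH₂⟩
    · rcases le_total F₁ F₂ with h | h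
      · exact route_f1 hcf₁ h
      · exact route_f2 hcf₂ h
    · exact route_h2 hch₂
    · refine route_f1 hcf₁ ?_
      show MvPolynomial.eval (tpt a) f₁ ≤ MvPolynomial.eval (tpt a) f₂
      rw [hFH₂, ← hval a haZ]
      exact hle₁
  · exact route_h1 hch₁
  · -- mixed case for f₁ + h₁ : F₁ = H₁
    rcases decomp hf₂0 hh₂0 (h2 a haZ) with ⟨hcf₂, hle₂⟩ | ⟨hch₂, _⟩ | ⟨⟨e, he, hev⟩, ⟨e', he', hev'⟩, hFH₂⟩
    · refine route_f2 hcf₂ ?_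
      show MvPolynomial.eval (tpt a) f₂ ≤ MvPolynomial.eval (tpt a) f₁
      rw [hFH₁, hval a haZ]
      exact hle₂
    · exact route_h2 hch₂
    · -- fully mixed case: explicit construction
      have hF₁₂ : F₁ = F₂ := by
        show MvPolynomial.eval (tpt a) f₁ = MvPolynomial.eval (tpt a) f₂
        rw [hFH₁, hval a haZ, ← hFH₂]
      set P := h₁ * h₂ * (f₁ + f₂) with hP
      have hEP : MvPolynomial.eval (tpt a) P = H₁ * H₂ * F₁ := by
        rw [hP, map_mul, map_mul, map_add, ← hH₁, ← hH₂, ← hF₁, ← hF₂, ← hF₁₂,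
          Tropical.add_self]
      have hP0 : MvPolynomial.eval (tpt a) P ≠ 0 := by
        rw [hEP]
        exact mul_ne_zero (mul_ne_zero hH₁0 hH₂0) hF₁0
      have hmul12 : ∀ x y : Fin n →₀ ℕ, mval (h₁ * h₂) (x + y) a ≤ mval h₁ x a * mval h₂ y a :=
        fun x y => mval_mul_le h₁ h₂ x y a
      have keybound : ∀ c : Fin n →₀ ℕ, mval (f₁ + f₂) c a ≤ F₁ →
          mval P (d' + e' + c) a = MvPolynomial.eval (tpt a) P ∧
            (d' + e' + c) ∈ P.support := by
        intro c hc
        have hle : mval P (d' + e' + c) a ≤ MvPolynomial.eval (tpt a) P := by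
          calc mval P (d' + e' + c) a
              ≤ mval (h₁ * h₂) (d' + e') a * mval (f₁ + f₂) c a :=
                mval_mul_le (h₁ * h₂) (f₁ + f₂) (d' + e') c a
            _ ≤ (mval h₁ d' a * mval h₂ e' a) * F₁ :=
                mul_le_mul' (hmul12 d' e') hc
            _ = MvPolynomial.eval (tpt a) P := by
                rw [hdv', hev', hEP, ← hH₁, ← hH₂]
        obtain ⟨hm, heq⟩ := master hP0 hle
        exact ⟨heq, hm⟩
      have hcd : mval (f₁ + f₂) d a ≤ F₁ := by
        rw [mval_add]
        exact le_trans (tadd_le_left _ _) (le_of_eq (hdv.trans hF₁.symm))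
      have hce : mval (f₁ + f₂) e a ≤ F₁ := by
        rw [mval_add, hF₁₂]
        exact le_trans (tadd_le_right _ _) (le_of_eq (hev.trans hF₂.symm))
      obtain ⟨heq₁, hm₁⟩ := keybound d hcd
      obtain ⟨heq₂, hm₂⟩ := keybound e hce
      have hde : d ≠ e := by
        intro h
        have : d ∈ f₁.support ∩ f₂.support := Finset.mem_inter.2 ⟨hd, h ▸ he⟩
        rw [hdisj] at this
        exact absurd this (Finset.notMem_empty d)
      exact ⟨d' + e' + d, hm₁, d' + e' + e, hm₂,
        fun h => hde (by
          ext i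
          have := DFunLike.congr_fun h i
          simp only [Finsupp.add_apply] at this
          omega),
        heq₁, heq₂⟩
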